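/- Given a vertex \(v\) of degree \(d \geq 4\) and a collection of \(d\) transit pairs (unordered pairs of edges incident to \(v\), each edge appearing in exactly two transit pairs, counted with multiplicity of its two valencies), there exists a partition \(\delta(v) = L \sqcup R\) with \(|L|, |R| \geq 2\) such that at most two transit pairs have one edge in \(L\) and the other in \(R\). -/
import Mathlib


open scoped Classical

/-- Given a vertex of degree `d ≥ 4` and `d` transit pairs of incident edges
(each edge appearing with total multiplicity 2, once per valence), there is a
partition `δ(v) = L ⊔ R` with `|L|, |R| ≥ 2` and at most two split transit pairs. -/
theorem stmt14 (d : ℕ) (hd : 4 ≤ d)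
    (q : Fin d → Fin d × Fin d)   -- the `d` transit pairs (unordered: order irrelevant)
    (hmult : ∀ i : Fin d,
      (∑ k : Fin d, ((if (q k).1 = i then 1 else 0) + (if (q k).2 = i then 1 else 0))) = 2) :
    ∃ L : Finset (Fin d), 2 ≤ L.card ∧ 2 ≤ d - L.card ∧
      (Finset.univ.filter (fun k : Fin d =>
        ((q k).1 ∈ L ∧ (q k).2 ∉ L) ∨ ((q k).1 ∉ L ∧ (q k).2 ∈ L))).card ≤ 2 := by
  have hd0 : 0 < d := by omega
  set z : Fin d := ⟨0, hd0⟩ with hz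
  set a := (q z).1 with ha
  set b := (q z).2 with hb
  obtain ⟨c, hc⟩ : ∃ c : Fin d, c ≠ a := by
    rcases Nat.eq_zero_or_pos a.val with h | h
    · exact ⟨⟨1, by omega⟩, by simp [Fin.ext_iff]; omega⟩
    · exact ⟨⟨0, by omega⟩, by simp [Fin.ext_iff]; omega⟩
  set L : Finset (Fin d) := if a = b then {a, c} else {a, b} with hL
  have hcard : L.card = 2 := by
    rw [hL]; split
    · exact Finset.card_pair (Ne.symm hc)
    · next h => exact Finset.card_pair h
  have haL : a ∈ L := by rw [hL]; split <;> simp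
  have hbL : b ∈ L := by
    rw [hL]; split
    · next h => simp [h]
    · simp
  refine ⟨L, by omega, by omega, ?_⟩
  set S := Finset.univ.filter (fun k : Fin d =>
        ((q k).1 ∈ L ∧ (q k).2 ∉ L) ∨ ((q k).1 ∉ L ∧ (q k).2 ∈ L)) with hS
  set F : Fin d → ℕ := fun k =>
    ∑ i ∈ L, ((if (q k).1 = i then 1 else 0) + (if (q k).2 = i then 1 else 0)) with hF
  have htot : ∑ k : Fin d, F k = 4 := by
    simp only [hF]
    rw [Finset.sum_comm]
    simp only [hmult]
    rw [Finset.sum_const, hcard]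
    rfl
  have h0notS : z ∉ S := by
    simp only [hS, Finset.mem_filter, Finset.mem_univ, true_and, ← ha, ← hb]
    tauto
  have hF0 : 2 ≤ F z := by
    simp only [hF, ← ha, ← hb]
    by_cases h : a = b
    · have : ((if a = a then 1 else 0) + (if b = a then 1 else 0) : ℕ) = 2 := by
        simp [h]
      calc (2:ℕ) = _ := this.symm
        _ ≤ _ := Finset.single_le_sum
          (f := fun i => (if a = i then 1 else 0) + (if b = i then 1 else 0))
          (fun i _ => Nat.zero_le _) haL
    · have hLeq : L = {a, b} := by rw [hL]; simp [h]
      rw [hLeq, Finset.sum_pair h]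
      simp [h, Ne.symm h]
  have hS1 : ∀ k ∈ S, 1 ≤ F k := by
    intro k hk
    simp only [hS, Finset.mem_filter, Finset.mem_univ, true_and] at hk
    rcases hk with ⟨h1, _⟩ | ⟨_, h2⟩
    · calc (1:ℕ) ≤ (if (q k).1 = (q k).1 then 1 else 0) + (if (q k).2 = (q k).1 then 1 else 0) := by simp
        _ ≤ F k := Finset.single_le_sum
          (f := fun i => (if (q k).1 = i then 1 else 0) + (if (q k).2 = i then 1 else 0))
          (fun i _ => Nat.zero_le _) h1
    · calc (1:ℕ) ≤ (if (q k).1 = (q k).2 then 1 else 0) + (if (q k).2 = (q k).2 then 1 else 0) := by simp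
        _ ≤ F k := Finset.single_le_sum
          (f := fun i => (if (q k).1 = i then 1 else 0) + (if (q k).2 = i then 1 else 0))
          (fun i _ => Nat.zero_le _) h2
  have hsum : F z + ∑ k ∈ S, F k ≤ 4 := by
    rw [← htot, ← Finset.sum_insert h0notS]
    exact Finset.sum_le_sum_of_subset (Finset.subset_univ _)
  have hcardS : S.card ≤ ∑ k ∈ S, F k := by
    calc S.card = ∑ _k ∈ S, 1 := by simp
      _ ≤ _ := Finset.sum_le_sum hS1
  omega
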